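/- arXiv:1705.05506 — 2 statements merged into one kernel-verified Lean document; each statement's English description precedes it below -/
import Mathlib

section
/- Let μ be a probability measure on a measurable space 𝒟, and let φ_0, …, φ_K : 𝒟 → ℝ be square-integrable functions with φ_0 ≡ 1 which are pairwise orthogonal in L²(μ). Let x be the ℝⁿ-valued random vector with components x_i = ∑_{j=0}^{K} c_{ij} φ_j, let S be a diagonal positive semi-definite n × n matrix, R a symmetric m × m matrix, u ∈ ℝᵐ, and g ∈ ℝⁿ. Define the concatenated coefficient vector C = (c_{10}, …, c_{1K}, …, c_{n0}, …, c_{nK}) ∈ ℝ^{n(K+1)}, the lifted goal G = (g_1, 0, …, 0, …, g_n, 0, …, 0) ∈ ℝ^{n(K+1)} (each goal entry followed by K zeros), and the matrix 𝐒 = S ⊗ diag(⟨φ_0,φ_0⟩, ⟨φ_1,φ_1⟩, …, ⟨φ_K,φ_K⟩), where ⊗ is the Kronecker product and ⟨φ_j, φ_j⟩ = ∫ φ_j² dμ. Then E[ ½ (x − g)ᵀ S (x − g) + ½ uᵀ R u ] = ½ (C − G)ᵀ 𝐒 (C − G) + ½ uᵀ R u. -/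
open MeasureTheory Matrix Kronecker

/-!
Since `φ 0 ≡ 1`, subtracting the goal only shifts the `0`-th coefficient:
`xᵢ - gᵢ = ∑ⱼ (cᵢⱼ - [j = 0] gᵢ) φⱼ`. As `S` is diagonal, the cost is a weighted sum of squares
of such expansions, and orthogonality kills the cross terms in
`E[(∑ⱼ aⱼ φⱼ)²] = ∑ⱼ aⱼ² ⟨φⱼ, φⱼ⟩`. The Kronecker product of the two diagonal matrices is the
diagonal matrix carrying exactly these weights.
-/

section Orthogonal

variable {Ω ι : Type*} [MeasurableSpace Ω] {μ : Measure Ω} {φ : ι → Ω → ℝ}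

theorem integral_mul_eq_ite_of_pairwise_orthogonal [DecidableEq ι]
    (horth : Pairwise fun i j => ∫ ω, φ i ω * φ j ω ∂μ = 0) (i j : ι) :
    ∫ ω, φ i ω * φ j ω ∂μ = if i = j then ∫ ω, φ i ω ^ 2 ∂μ else 0 := by
  split_ifs with h
  · simp [h, sq]
  · exact horth h

variable [Fintype ι]

theorem integral_sum_mul_sq_of_pairwise_orthogonal (hmem : ∀ j, MemLp (φ j) 2 μ)
    (horth : Pairwise fun i j => ∫ ω, φ i ω * φ j ω ∂μ = 0) (a : ι → ℝ) :
    ∫ ω, (∑ j, a j * φ j ω) ^ 2 ∂μ = ∑ j, a j ^ 2 * ∫ ω, φ j ω ^ 2 ∂μ := by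
  classical
  have hexpand : ∀ ω, (∑ j, a j * φ j ω) ^ 2 = ∑ j, ∑ k, a j * a k * (φ j ω * φ k ω) := by
    intro ω
    rw [sq, Finset.sum_mul_sum]
    exact Finset.sum_congr rfl fun j _ => Finset.sum_congr rfl fun k _ => by ring
  have hint : ∀ j k, Integrable (fun ω => a j * a k * (φ j ω * φ k ω)) μ := fun j k =>
    ((hmem j).integrable_mul (hmem k)).const_mul _
  simp_rw [hexpand]
  rw [integral_finsetSum _ fun j _ => integrable_finsetSum _ fun k _ => hint j k]
  refine Finset.sum_congr rfl fun j _ => ?_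
  rw [integral_finsetSum _ fun k _ => hint j k]
  simp only [integral_const_mul, integral_mul_eq_ite_of_pairwise_orthogonal horth, mul_ite,
    mul_zero, Finset.sum_ite_eq, Finset.mem_univ, if_true]
  ring

theorem integrable_sum_mul_sq (hmem : ∀ j, MemLp (φ j) 2 μ) (a : ι → ℝ) :
    Integrable (fun ω => (∑ j, a j * φ j ω) ^ 2) μ :=
  (memLp_finsetSum _ fun j _ => (hmem j).const_mul (a j)).integrable_sq

end Orthogonal

theorem Matrix.dotProduct_diagonal_mulVec_self {ι R : Type*} [Fintype ι] [DecidableEq ι]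
    [CommSemiring R] (d v : ι → R) : v ⬝ᵥ diagonal d *ᵥ v = ∑ i, d i * v i ^ 2 := by
  simp only [dotProduct, mulVec_diagonal]
  exact Finset.sum_congr rfl fun i _ => by ring

theorem sum_mul_sub_eq_sum_sub_ite_mul {ι : Type*} [Fintype ι] [DecidableEq ι] {φ : ι → ℝ}
    {j₀ : ι} (hφ : φ j₀ = 1) (c : ι → ℝ) (g : ℝ) :
    (∑ j, c j * φ j) - g = ∑ j, (c j - if j = j₀ then g else 0) * φ j := by
  simp [sub_mul, Finset.sum_sub_distrib, ite_mul, hφ]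

theorem gpc_expected_quadratic_cost_general {Ω : Type*} [MeasurableSpace Ω] (μ : Measure Ω)
    [IsProbabilityMeasure μ]
    (K n m : ℕ) (φ : Fin (K + 1) → Ω → ℝ)
    (hmem : ∀ j, MemLp (φ j) 2 μ)
    (hφ0 : ∀ ω, φ 0 ω = 1)
    (horth : ∀ i j, i ≠ j → ∫ ω, φ i ω * φ j ω ∂μ = 0)
    (c : Fin n → Fin (K + 1) → ℝ)
    (S : Matrix (Fin n) (Fin n) ℝ) (hSdiag : ∀ i j, i ≠ j → S i j = 0)
    (R : Matrix (Fin m) (Fin m) ℝ)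
    (u : Fin m → ℝ) (g : Fin n → ℝ) :
    ∫ ω, ((1 / 2) * ((fun i => (∑ j, c i j * φ j ω) - g i) ⬝ᵥ
            S.mulVec (fun i => (∑ j, c i j * φ j ω) - g i))
          + (1 / 2) * (u ⬝ᵥ R.mulVec u)) ∂μ
      = (1 / 2) * ((fun p : Fin n × Fin (K + 1) =>
            c p.1 p.2 - if p.2 = 0 then g p.1 else 0) ⬝ᵥ
          (S ⊗ₖ Matrix.diagonal fun j => ∫ ω, (φ j ω) ^ 2 ∂μ).mulVec
            (fun p : Fin n × Fin (K + 1) =>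
              c p.1 p.2 - if p.2 = 0 then g p.1 else 0))
        + (1 / 2) * (u ⬝ᵥ R.mulVec u) := by
  classical
  set a : Fin n → Fin (K + 1) → ℝ := fun i j => c i j - if j = 0 then g i else 0
  have hdev : ∀ ω i, (∑ j, c i j * φ j ω) - g i = ∑ j, a i j * φ j ω := fun ω i =>
    sum_mul_sub_eq_sum_sub_ite_mul (φ := (φ · ω)) (hφ0 ω) (c i) (g i)
  rw [← IsDiag.diagonal_diag (A := S) hSdiag, diagonal_kronecker_diagonal,
    dotProduct_diagonal_mulVec_self]
  simp_rw [hdev, dotProduct_diagonal_mulVec_self]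
  have hint : ∀ i, Integrable (fun ω => S.diag i * (∑ j, a i j * φ j ω) ^ 2) μ := fun i =>
    (integrable_sum_mul_sq hmem (a i)).const_mul _
  rw [integral_add ((integrable_finsetSum _ fun i _ => hint i).const_mul _) (integrable_const _),
    integral_const_mul, integral_finsetSum _ fun i _ => hint i, integral_const, probReal_univ,
    one_smul, Fintype.sum_prod_type]
  simp only [integral_const_mul, integral_sum_mul_sq_of_pairwise_orthogonal hmem horth,
    Finset.mul_sum]
  congr 1
  exact Finset.sum_congr rfl fun i _ => Finset.sum_congr rfl fun j _ => by ring

/-- Lemma 2 of the paper: an expected quadratic cost on a random state with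
truncated gPC expansion `x_i = ∑_{j=0}^K c_{ij} φ_j` equals a deterministic quadratic cost
on the gPC coefficients, with lifted weighting matrix `𝐒 = S ⊗ diag(⟨φ_j,φ_j⟩)` and lifted
goal `G` placing each goal entry at the `0`-th coefficient. -/
theorem gpc_expected_quadratic_cost {Ω : Type*} [MeasurableSpace Ω] (μ : Measure Ω)
    [IsProbabilityMeasure μ]
    (K n m : ℕ) (φ : Fin (K + 1) → Ω → ℝ)
    (hmem : ∀ j, MemLp (φ j) 2 μ)
    (hφ0 : ∀ ω, φ 0 ω = 1)
    (horth : ∀ i j, i ≠ j → ∫ ω, φ i ω * φ j ω ∂μ = 0)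
    (c : Fin n → Fin (K + 1) → ℝ)
    (S : Matrix (Fin n) (Fin n) ℝ) (hSdiag : ∀ i j, i ≠ j → S i j = 0)
    (hSpsd : S.PosSemidef)
    (R : Matrix (Fin m) (Fin m) ℝ) (hR : R.IsSymm)
    (u : Fin m → ℝ) (g : Fin n → ℝ) :
    ∫ ω, ((1 / 2) * ((fun i => (∑ j, c i j * φ j ω) - g i) ⬝ᵥ
            S.mulVec (fun i => (∑ j, c i j * φ j ω) - g i))
          + (1 / 2) * (u ⬝ᵥ R.mulVec u)) ∂μ
      = (1 / 2) * ((fun p : Fin n × Fin (K + 1) =>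
            c p.1 p.2 - if p.2 = 0 then g p.1 else 0) ⬝ᵥ
          (S ⊗ₖ Matrix.diagonal fun j => ∫ ω, (φ j ω) ^ 2 ∂μ).mulVec
            (fun p : Fin n × Fin (K + 1) =>
              c p.1 p.2 - if p.2 = 0 then g p.1 else 0))
        + (1 / 2) * (u ⬝ᵥ R.mulVec u) :=
  gpc_expected_quadratic_cost_general μ K n m φ hmem hφ0 horth c S hSdiag R u g
end

section
/- Let μ be a probability measure on 𝒟 ⊆ ℝ^d, let φ_0, …, φ_K : 𝒟 → ℝ be measurable, let L : ℝᴺ × ℝᴺ × 𝒟 → ℝ be continuously differentiable in its first two arguments, and let F : ℝᴺ × ℝᴺ × ℝᵐ × 𝒟 → ℝᴺ be measurable. Let Q, V, P̂ : [t₀, t_f] → ℝ^{N×(K+1)} be differentiable coefficient trajectories and u : [t₀,t_f] → ℝᵐ a control, and write q(Q(t),ξ)_a = ∑_l Q_{al}(t) φ_l(ξ), v(V(t),ξ)_a = ∑_l V_{al}(t) φ_l(ξ). Assume that for all t, i, j: (i) V_{ij}(t) = Q̇_{ij}(t); (ii) P̂_{ij}(t) = ∫_𝒟 (∂L/∂v_i)(q(Q(t),ξ),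 v(V(t),ξ), ξ) φ_j(ξ) dμ(ξ); (iii) d P̂_{ij}/dt (t) = ∫_𝒟 (∂L/∂q_i)(q(Q(t),ξ), v(V(t),ξ), ξ) φ_j(ξ) dμ(ξ) + ∫_𝒟 F_i(q(Q(t),ξ), v(V(t),ξ), u(t), ξ) φ_j(ξ) dμ(ξ). Define L̂(Q,V) = ∫_𝒟 L(q(Q,ξ), v(V,ξ), ξ) dμ(ξ) and F̂_{ij}(Q,V,u) = ∫_𝒟 F_i(q(Q,ξ), v(V,ξ), u, ξ) φ_j(ξ) dμ(ξ). Assume further that on a neighborhood of each point (Q(t), V(t)) there are μ-integrable dominating functions justifying differentiation of L̂ under the integral sign in each coefficient entry. Then for all t, i, j: V_{ij}(t) = Q̇_{ij}(t), P̂_{ij}(t) = ∂L̂/∂V_{ij}(Q(t),V(t)), and d P̂_{ij}/dt (t) = ∂L̂/∂Q_{ij}(Q(t),V(t)) + F̂_{ij}(Q(t),V(t),u(t)); that is, the gPC coefficients satisfy Hamilton's equations in Pontryagin form with Lagrangian L̂ and non-conservative forces F̂. -/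
/-!
Perturbing the coefficient `V_ij` by `s` moves `v(V, ξ)` along the line `v + s φ_j(ξ) e_i`, so
by the chain rule the `s`-derivative of the integrand of `L̂` is `∂L/∂v_i · φ_j`, continuous in
`s` because `L` is `C¹`. The domination hypothesis bounds this derivative almost everywhere for
each fixed `s`; continuity in `s` upgrades this, through a countable dense set of parameters, to
an almost-everywhere bound uniform in `s`, which is what differentiation under the integral sign
needs. The derivative in `Q_ij` is handled identically, and (ii), (iii) identify the results
with `P̂` and `dP̂/dt - F̂`.
-/

open MeasureTheory Filter Topology

section

variable {α : Type*} [MeasurableSpace α] {μ : Measure α}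
  {E : Type*} [NormedAddCommGroup E]

theorem aestronglyMeasurable_of_hasDerivAt {𝕜 : Type*} [NontriviallyNormedField 𝕜]
    [NormedSpace 𝕜 E] {F : 𝕜 → α → E} {F' : α → E} {x₀ : 𝕜}
    (hF_meas : ∀ᶠ x in 𝓝 x₀, AEStronglyMeasurable (F x) μ)
    (h_diff : ∀ᵐ a ∂μ, HasDerivAt (F · a) (F' a) x₀) :
    AEStronglyMeasurable F' μ := by
  obtain ⟨v, hv⟩ := (𝓝[≠] x₀).exists_seq_tendsto
  obtain ⟨n₀, hn₀⟩ :=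
    eventually_atTop.1 (hv.eventually (eventually_nhdsWithin_of_eventually_nhds hF_meas))
  have hv' : Tendsto (fun n => v (n + n₀)) atTop (𝓝[≠] x₀) := (tendsto_add_atTop_iff_nat n₀).2 hv
  refine aestronglyMeasurable_of_tendsto_ae atTop
    (f := fun n a => slope (F · a) x₀ (v (n + n₀))) (fun n => ?_) ?_
  · simp only [slope_def_module]
    exact ((hn₀ _ (Nat.le_add_left _ _)).sub hF_meas.self_of_nhds).const_smul _
  · filter_upwards [h_diff] with a ha
    exact ha.tendsto_slope.comp hv'

theorem ae_forall_norm_le_of_continuous {X : Type*} [TopologicalSpace X]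
    [TopologicalSpace.SeparableSpace X] {F' : X → α → E} {bound : α → ℝ} {s : Set X}
    (hs : IsOpen s) (h_cont : ∀ᵐ a ∂μ, Continuous (F' · a))
    (h_bound : ∀ x ∈ s, ∀ᵐ a ∂μ, ‖F' x a‖ ≤ bound a) :
    ∀ᵐ a ∂μ, ∀ x ∈ s, ‖F' x a‖ ≤ bound a := by
  obtain ⟨T, hT_count, hT_dense⟩ := TopologicalSpace.exists_countable_dense X
  have h_countable : ∀ᵐ a ∂μ, ∀ x ∈ s ∩ T, ‖F' x a‖ ≤ bound a :=
    (ae_ball_iff (hT_count.mono Set.inter_subset_right)).2 fun x hx => h_bound x hx.1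
  filter_upwards [h_countable, h_cont] with a ha hc x hx
  exact closure_minimal ha (isClosed_le hc.norm continuous_const)
    (hT_dense.open_subset_closure_inter hs hx)

variable [NormedSpace ℝ E]

theorem hasDerivAt_integral_of_continuous_deriv {𝕜 : Type*} [RCLike 𝕜] [NormedSpace 𝕜 E]
    {F F' : 𝕜 → α → E} {x₀ : 𝕜} {bound : α → ℝ}
    (hF_meas : ∀ᶠ x in 𝓝 x₀, AEStronglyMeasurable (F x) μ) (hF_int : Integrable (F x₀) μ)
    (h_diff : ∀ᵐ a ∂μ, ∀ x, HasDerivAt (F · a) (F' x a) x)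
    (h_cont : ∀ᵐ a ∂μ, Continuous (F' · a))
    (h_bound : ∀ᶠ x in 𝓝 x₀, ∀ᵐ a ∂μ, ‖F' x a‖ ≤ bound a)
    (bound_integrable : Integrable bound μ) :
    HasDerivAt (fun x => ∫ a, F x a ∂μ) (∫ a, F' x₀ a ∂μ) x₀ := by
  obtain ⟨s, hs_bound, hs_open, hx₀⟩ := eventually_nhds_iff.1 h_bound
  exact (hasDerivAt_integral_of_dominated_loc_of_deriv_le (hs_open.mem_nhds hx₀) hF_meas hF_int
    (aestronglyMeasurable_of_hasDerivAt hF_meas (h_diff.mono fun _ h => h x₀))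
    (ae_forall_norm_le_of_continuous hs_open h_cont hs_bound) bound_integrable
    (h_diff.mono fun _ h x _ => h x)).2

theorem hasDerivAt_integral_add_smul {V : Type*} [NormedAddCommGroup V] [NormedSpace ℝ V]
    {g : α → V → E} {x w : α → V} {bound : α → ℝ}
    (hg : ∀ a, ContDiff ℝ 1 (g a))
    (hg_meas : ∀ᶠ s in 𝓝 (0 : ℝ), AEStronglyMeasurable (fun a => g a (x a + s • w a)) μ)
    (hg_int : Integrable (fun a => g a (x a)) μ)
    (h_bound : ∀ᶠ s in 𝓝 (0 : ℝ), ∀ᵐ a ∂μ, ‖fderiv ℝ (g a) (x a + s • w a) (w a)‖ ≤ bound a)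
    (bound_integrable : Integrable bound μ) :
    HasDerivAt (fun s : ℝ => ∫ a, g a (x a + s • w a) ∂μ)
      (∫ a, fderiv ℝ (g a) (x a) (w a) ∂μ) 0 := by
  have h_line : ∀ a s, HasDerivAt (fun s : ℝ => x a + s • w a) (w a) s := fun a s => by
    simpa using ((hasDerivAt_id s).smul_const (w a)).const_add (x a)
  have h_diff : ∀ a s, HasDerivAt (fun s : ℝ => g a (x a + s • w a))
      (fderiv ℝ (g a) (x a + s • w a) (w a)) s := fun a s =>
    (((hg a).differentiable one_ne_zero _).hasFDerivAt).comp_hasDerivAt s (h_line a s)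
  have h_cont : ∀ a, Continuous fun s : ℝ => fderiv ℝ (g a) (x a + s • w a) (w a) := fun a =>
    (((hg a).continuous_fderiv one_ne_zero).comp (by fun_prop)).clm_apply continuous_const
  simpa using hasDerivAt_integral_of_continuous_deriv hg_meas (by simpa using hg_int)
    (ae_of_all _ h_diff) (ae_of_all _ h_cont) h_bound bound_integrable

theorem sum_add_ite_mul {ι κ : Type*} [Fintype κ] [DecidableEq ι] [DecidableEq κ]
    (C : ι → κ → ℝ) (c : κ → ℝ) (i : ι) (j : κ) (s : ℝ) :
    (fun a => ∑ l, (C a l + if a = i ∧ l = j then s else 0) * c l)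
      = (fun a => ∑ l, C a l * c l) + s • Pi.single i (c j) := by
  funext a
  by_cases ha : a = i
  · subst ha
    simp [add_mul, Finset.sum_add_distrib]
  · simp [ha]

theorem hasDerivAt_integral_gpc_coeff {ι κ : Type*} [Fintype ι] [Fintype κ] [DecidableEq ι]
    [DecidableEq κ] {φ : κ → α → ℝ} {g : α → (ι → ℝ) → ℝ} {C : ι → κ → ℝ} {U : Set (ι → κ → ℝ)}
    {G : α → ℝ} (i : ι) (j : κ) (hg : ∀ ξ, ContDiff ℝ 1 (g ξ)) (hU : U ∈ 𝓝 C)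
    (hG : Integrable G μ)
    (h_bound : ∀ C' ∈ U, ∀ᵐ ξ ∂μ,
      |fderiv ℝ (g ξ) (fun a => ∑ l, C' a l * φ l ξ) (Pi.single i 1) * φ j ξ| ≤ G ξ)
    (h_int : ∀ C' ∈ U, Integrable (fun ξ => g ξ (fun a => ∑ l, C' a l * φ l ξ)) μ) :
    HasDerivAt
      (fun s : ℝ => ∫ ξ, g ξ (fun a => ∑ l, (C a l + if a = i ∧ l = j then s else 0) * φ l ξ) ∂μ)
      (∫ ξ, fderiv ℝ (g ξ) (fun a => ∑ l, C a l * φ l ξ) (Pi.single i 1) * φ j ξ ∂μ) 0 := by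
  let path : ℝ → ι → κ → ℝ := fun s a l => C a l + if a = i ∧ l = j then s else 0
  have h_path : ∀ᶠ s in 𝓝 (0 : ℝ), path s ∈ U := by
    have : Continuous path := continuous_pi fun a => continuous_pi fun l =>
      continuous_const.add <|
        continuous_if_const _ (fun _ => continuous_id) fun _ => continuous_const
    exact this.tendsto' 0 C (by simp [path]) hU
  have h_dir : ∀ ξ y, fderiv ℝ (g ξ) y (Pi.single i (φ j ξ))
      = fderiv ℝ (g ξ) y (Pi.single i 1) * φ j ξ := fun ξ y => by
    rw [mul_comm, ← smul_eq_mul, ← map_smul, ← Pi.single_smul, smul_eq_mul, mul_one]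
  simp only [sum_add_ite_mul, ← h_dir]
  refine hasDerivAt_integral_add_smul hg ?_ (h_int C (mem_of_mem_nhds hU)) ?_ hG
  · filter_upwards [h_path] with s hs
    simpa only [path, sum_add_ite_mul] using (h_int _ hs).aestronglyMeasurable
  · filter_upwards [h_path] with s hs
    simpa only [path, sum_add_ite_mul, h_dir, Real.norm_eq_abs] using h_bound _ hs

end

theorem gpc_lagrangian_system_general {D : Type*} [MeasurableSpace D]
    (μ : Measure D)
    (N K m : ℕ) (φ : Fin (K + 1) → D → ℝ)
    (L : (Fin N → ℝ) → (Fin N → ℝ) → D → ℝ)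
    (hL : ∀ ξ : D, ContDiff ℝ 1 (fun p : (Fin N → ℝ) × (Fin N → ℝ) => L p.1 p.2 ξ))
    (F : (Fin N → ℝ) → (Fin N → ℝ) → (Fin m → ℝ) → D → Fin N → ℝ)
    (t₀ tf : ℝ)
    (Q V P Pdot : ℝ → Fin N → Fin (K + 1) → ℝ) (u : ℝ → Fin m → ℝ)
    -- (i) V_{ij} = Q̇_{ij}
    (hQV : ∀ t ∈ Set.Icc t₀ tf, ∀ (i : Fin N) (j : Fin (K + 1)),
      HasDerivAt (fun τ => Q τ i j) (V t i j) t)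
    -- (ii) P̂_{ij} = Galerkin projection of ∂L/∂v_i
    (hP : ∀ t ∈ Set.Icc t₀ tf, ∀ (i : Fin N) (j : Fin (K + 1)),
      P t i j = ∫ ξ, fderiv ℝ (fun v => L (fun a => ∑ l, Q t a l * φ l ξ) v ξ)
          (fun a => ∑ l, V t a l * φ l ξ) (Pi.single i 1) * φ j ξ ∂μ)
    -- (iii) dP̂_{ij}/dt = Galerkin projection of ∂L/∂q_i + F_i
    (hPdot : ∀ t ∈ Set.Icc t₀ tf, ∀ (i : Fin N) (j : Fin (K + 1)),
      Pdot t i j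
        = (∫ ξ, fderiv ℝ (fun q => L q (fun a => ∑ l, V t a l * φ l ξ) ξ)
              (fun a => ∑ l, Q t a l * φ l ξ) (Pi.single i 1) * φ j ξ ∂μ)
          + ∫ ξ, F (fun a => ∑ l, Q t a l * φ l ξ) (fun a => ∑ l, V t a l * φ l ξ)
              (u t) ξ i * φ j ξ ∂μ)
    -- dominated-derivative conditions justifying differentiation of L̂ under the integral
    (hdom : ∀ t ∈ Set.Icc t₀ tf,
      ∃ U ∈ nhds (Q t, V t), ∃ G : D → ℝ, Integrable G μ ∧
        (∀ p ∈ U, ∀ᵐ ξ ∂μ, ∀ (a : Fin N) (l : Fin (K + 1)),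
          |fderiv ℝ (fun q => L q (fun b => ∑ l', Prod.snd p b l' * φ l' ξ) ξ)
              (fun b => ∑ l', Prod.fst p b l' * φ l' ξ) (Pi.single a 1) * φ l ξ| ≤ G ξ ∧
          |fderiv ℝ (fun v => L (fun b => ∑ l', Prod.fst p b l' * φ l' ξ) v ξ)
              (fun b => ∑ l', Prod.snd p b l' * φ l' ξ) (Pi.single a 1) * φ l ξ| ≤ G ξ) ∧
        (∀ p ∈ U, Integrable (fun ξ =>
          L (fun a => ∑ l', Prod.fst p a l' * φ l' ξ)
            (fun a => ∑ l', Prod.snd p a l' * φ l' ξ) ξ) μ)) :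
    -- Hamilton's equations in Pontryagin form for the gPC coefficients
    (∀ t ∈ Set.Icc t₀ tf, ∀ (i : Fin N) (j : Fin (K + 1)),
      HasDerivAt (fun τ => Q τ i j) (V t i j) t)
    ∧
    -- P̂_{ij}(t) = ∂L̂/∂V_{ij}(Q(t), V(t))
    (∀ t ∈ Set.Icc t₀ tf, ∀ (i : Fin N) (j : Fin (K + 1)),
      HasDerivAt
        (fun s : ℝ =>
          ∫ ξ, L (fun a => ∑ l, Q t a l * φ l ξ)
              (fun a => ∑ l, (V t a l + if a = i ∧ l = j then s else 0) * φ l ξ) ξ ∂μ)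
        (P t i j) 0)
    ∧
    -- dP̂_{ij}/dt (t) = ∂L̂/∂Q_{ij}(Q(t), V(t)) + F̂_{ij}(Q(t), V(t), u(t))
    (∀ t ∈ Set.Icc t₀ tf, ∀ (i : Fin N) (j : Fin (K + 1)),
      HasDerivAt
        (fun s : ℝ =>
          ∫ ξ, L (fun a => ∑ l, (Q t a l + if a = i ∧ l = j then s else 0) * φ l ξ)
              (fun a => ∑ l, V t a l * φ l ξ) ξ ∂μ)
        (Pdot t i j
          - ∫ ξ, F (fun a => ∑ l, Q t a l * φ l ξ) (fun a => ∑ l, V t a l * φ l ξ)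
              (u t) ξ i * φ j ξ ∂μ)
        0) := by
  refine ⟨hQV, fun t ht i j => ?_, fun t ht i j => ?_⟩
  · obtain ⟨U, hU, G, hG, h_bound, h_int⟩ := hdom t ht
    rw [hP t ht i j]
    exact hasDerivAt_integral_gpc_coeff (U := Prod.mk (Q t) ⁻¹' U) i j
      (fun ξ => (hL ξ).comp (contDiff_const.prodMk contDiff_id))
      ((Continuous.prodMk_right (Q t)).continuousAt.preimage_mem_nhds hU) hG
      (fun V' hV' => (h_bound _ hV').mono fun _ h => (h i j).2) (fun V' hV' => h_int _ hV')
  · obtain ⟨U, hU, G, hG, h_bound, h_int⟩ := hdom t ht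
    rw [hPdot t ht i j, add_sub_cancel_right]
    exact hasDerivAt_integral_gpc_coeff (U := (·, V t) ⁻¹' U) i j
      (fun ξ => (hL ξ).comp (contDiff_id.prodMk contDiff_const))
      ((Continuous.prodMk_left (V t)).continuousAt.preimage_mem_nhds hU) hG
      (fun Q' hQ' => (h_bound _ hQ').mono fun _ h => (h i j).1) (fun Q' hQ' => h_int _ hQ')

/-- Lemma 1 of the paper: if the gPC coefficient trajectories `Q, V, P̂`
satisfy the Galerkin projections of the Pontryagin–d'Alembert equations
`v = q̇`, `p = ∂L/∂v`, `ṗ = ∂L/∂q + F`, then they satisfy Hamilton's equations in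
Pontryagin form for the gPC Lagrangian `L̂(Q,V) = ∫ L(q(Q,ξ), v(V,ξ), ξ) dμ(ξ)` and
forces `F̂_{ij}(Q,V,u) = ∫ F_i(q(Q,ξ), v(V,ξ), u, ξ) φ_j(ξ) dμ(ξ)`: namely
`V_{ij} = Q̇_{ij}`, `P̂_{ij} = ∂L̂/∂V_{ij}`, and `dP̂_{ij}/dt = ∂L̂/∂Q_{ij} + F̂_{ij}`. -/
theorem gpc_lagrangian_system {D : Type*} [MeasurableSpace D]
    (μ : Measure D) [IsProbabilityMeasure μ]
    (N K m : ℕ) (φ : Fin (K + 1) → D → ℝ) (hφmeas : ∀ l, Measurable (φ l))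
    (L : (Fin N → ℝ) → (Fin N → ℝ) → D → ℝ)
    (hL : ∀ ξ : D, ContDiff ℝ 1 (fun p : (Fin N → ℝ) × (Fin N → ℝ) => L p.1 p.2 ξ))
    (F : (Fin N → ℝ) → (Fin N → ℝ) → (Fin m → ℝ) → D → Fin N → ℝ)
    (hFmeas : Measurable
      (fun p : ((Fin N → ℝ) × (Fin N → ℝ) × (Fin m → ℝ) × D) =>
        F p.1 p.2.1 p.2.2.1 p.2.2.2))
    (t₀ tf : ℝ)
    (Q V P Pdot : ℝ → Fin N → Fin (K + 1) → ℝ) (u : ℝ → Fin m → ℝ)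
    -- (i) V_{ij} = Q̇_{ij}
    (hQV : ∀ t ∈ Set.Icc t₀ tf, ∀ (i : Fin N) (j : Fin (K + 1)),
      HasDerivAt (fun τ => Q τ i j) (V t i j) t)
    -- (ii) P̂_{ij} = Galerkin projection of ∂L/∂v_i
    (hP : ∀ t ∈ Set.Icc t₀ tf, ∀ (i : Fin N) (j : Fin (K + 1)),
      P t i j = ∫ ξ, fderiv ℝ (fun v => L (fun a => ∑ l, Q t a l * φ l ξ) v ξ)
          (fun a => ∑ l, V t a l * φ l ξ) (Pi.single i 1) * φ j ξ ∂μ)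
    -- `Pdot` is the time derivative of `P̂`
    (hPderiv : ∀ t ∈ Set.Icc t₀ tf, ∀ (i : Fin N) (j : Fin (K + 1)),
      HasDerivAt (fun τ => P τ i j) (Pdot t i j) t)
    -- (iii) dP̂_{ij}/dt = Galerkin projection of ∂L/∂q_i + F_i
    (hPdot : ∀ t ∈ Set.Icc t₀ tf, ∀ (i : Fin N) (j : Fin (K + 1)),
      Pdot t i j
        = (∫ ξ, fderiv ℝ (fun q => L q (fun a => ∑ l, V t a l * φ l ξ) ξ)
              (fun a => ∑ l, Q t a l * φ l ξ) (Pi.single i 1) * φ j ξ ∂μ)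
          + ∫ ξ, F (fun a => ∑ l, Q t a l * φ l ξ) (fun a => ∑ l, V t a l * φ l ξ)
              (u t) ξ i * φ j ξ ∂μ)
    -- dominated-derivative conditions justifying differentiation of L̂ under the integral
    (hdom : ∀ t ∈ Set.Icc t₀ tf,
      ∃ U ∈ nhds (Q t, V t), ∃ G : D → ℝ, Integrable G μ ∧
        (∀ p ∈ U, ∀ᵐ ξ ∂μ, ∀ (a : Fin N) (l : Fin (K + 1)),
          |fderiv ℝ (fun q => L q (fun b => ∑ l', Prod.snd p b l' * φ l' ξ) ξ)
              (fun b => ∑ l', Prod.fst p b l' * φ l' ξ) (Pi.single a 1) * φ l ξ| ≤ G ξ ∧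
          |fderiv ℝ (fun v => L (fun b => ∑ l', Prod.fst p b l' * φ l' ξ) v ξ)
              (fun b => ∑ l', Prod.snd p b l' * φ l' ξ) (Pi.single a 1) * φ l ξ| ≤ G ξ) ∧
        (∀ p ∈ U, Integrable (fun ξ =>
          L (fun a => ∑ l', Prod.fst p a l' * φ l' ξ)
            (fun a => ∑ l', Prod.snd p a l' * φ l' ξ) ξ) μ)) :
    -- Hamilton's equations in Pontryagin form for the gPC coefficients
    (∀ t ∈ Set.Icc t₀ tf, ∀ (i : Fin N) (j : Fin (K + 1)),
      HasDerivAt (fun τ => Q τ i j) (V t i j) t)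
    ∧
    -- P̂_{ij}(t) = ∂L̂/∂V_{ij}(Q(t), V(t))
    (∀ t ∈ Set.Icc t₀ tf, ∀ (i : Fin N) (j : Fin (K + 1)),
      HasDerivAt
        (fun s : ℝ =>
          ∫ ξ, L (fun a => ∑ l, Q t a l * φ l ξ)
              (fun a => ∑ l, (V t a l + if a = i ∧ l = j then s else 0) * φ l ξ) ξ ∂μ)
        (P t i j) 0)
    ∧
    -- dP̂_{ij}/dt (t) = ∂L̂/∂Q_{ij}(Q(t), V(t)) + F̂_{ij}(Q(t), V(t), u(t))
    (∀ t ∈ Set.Icc t₀ tf, ∀ (i : Fin N) (j : Fin (K + 1)),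
      HasDerivAt
        (fun s : ℝ =>
          ∫ ξ, L (fun a => ∑ l, (Q t a l + if a = i ∧ l = j then s else 0) * φ l ξ)
              (fun a => ∑ l, V t a l * φ l ξ) ξ ∂μ)
        (Pdot t i j
          - ∫ ξ, F (fun a => ∑ l, Q t a l * φ l ξ) (fun a => ∑ l, V t a l * φ l ξ)
              (u t) ξ i * φ j ξ ∂μ)
        0) :=
  gpc_lagrangian_system_general μ N K m φ L hL F t₀ tf Q V P Pdot u hQV hP hPdot hdom
end
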